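/- arXiv:2306.15986 — 3 statements merged into one kernel-verified Lean document; each statement's English description precedes it below -/
import Mathlib

section
/- Let G be a super edge-magic graph with p vertices and q = 2p − 3 edges that contains a triangle (equivalently, has girth 3). Then every super edge-magic labeling of G has valence 3p; in particular the super edge-magic set of G satisfies σ_G = {3p} and |σ_G| = 1. -/
/-!
The edge sums `f u + f v = k - f (uv)` of a super edge-magic labeling are pairwise distinct and
lie in `[3, 2p - 1]`, an interval with exactly `2p - 3 = q` elements; hence the sums `3` and
`2p - 1` both occur. Since edge labels lie in `[p + 1, p + q]`, the first gives
`k ≤ 3 + (p + q) = 3p` and the second `k ≥ (2p - 1) + (p + 1) = 3p`.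
-/

/-- `f` is an edge-magic labeling of the graph `G` with valence `k`:
`f` is a bijection from `V(G) ∪ E(G)` onto `{1, …, p + q}` and
`f u + f v + f uv = k` for every edge `uv`. -/
def IsEdgeMagic {V : Type*} [Fintype V] (G : SimpleGraph V)
    (f : V ⊕ G.edgeSet → ℕ) (k : ℕ) : Prop :=
  Set.BijOn f Set.univ (Set.Icc 1 (Fintype.card V + G.edgeSet.ncard)) ∧
  ∀ u v, ∀ h : G.Adj u v,
    f (Sum.inl u) + f (Sum.inl v) + f (Sum.inr ⟨s(u, v), G.mem_edgeSet.mpr h⟩) = k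

/-- `f` is a super edge-magic labeling of `G` with valence `k`: an edge-magic
labeling whose vertex labels are exactly `{1, …, p}`. -/
def IsSuperEdgeMagic {V : Type*} [Fintype V] (G : SimpleGraph V)
    (f : V ⊕ G.edgeSet → ℕ) (k : ℕ) : Prop :=
  IsEdgeMagic G f k ∧ ∀ v, f (Sum.inl v) ∈ Set.Icc 1 (Fintype.card V)

theorem Set.range_eq_of_injective_of_ncard_le {α β : Type*} {f : α → β} {t : Set β}
    (ht : t.Finite) (hf : Function.Injective f) (hsub : Set.range f ⊆ t)
    (hcard : t.ncard ≤ Nat.card α) : Set.range f = t :=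
  Set.eq_of_subset_of_ncard_le hsub (by rwa [Set.ncard_range_of_injective hf]) ht

namespace IsSuperEdgeMagic

variable {V : Type*} [Fintype V] {G : SimpleGraph V} {f : V ⊕ G.edgeSet → ℕ} {k : ℕ}

theorem injective (hf : IsSuperEdgeMagic G f k) : Function.Injective f :=
  Set.injOn_univ.mp hf.1.1.injOn

theorem label_mem_Icc (hf : IsSuperEdgeMagic G f k) (x : V ⊕ G.edgeSet) :
    f x ∈ Set.Icc 1 (Fintype.card V + G.edgeSet.ncard) :=
  hf.1.1.mapsTo (Set.mem_univ x)

theorem range_vertex_label (hf : IsSuperEdgeMagic G f k) :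
    Set.range (fun v => f (Sum.inl v)) = Set.Icc 1 (Fintype.card V) :=
  Set.range_eq_of_injective_of_ncard_le (Set.finite_Icc _ _)
    (hf.injective.comp Sum.inl_injective) (Set.range_subset_iff.2 hf.2)
    (by simp [Nat.card_eq_fintype_card])

theorem card_lt_edge_label (hf : IsSuperEdgeMagic G f k) (e : G.edgeSet) :
    Fintype.card V < f (Sum.inr e) := by
  by_contra! h
  obtain ⟨v, hv⟩ : f (Sum.inr e) ∈ Set.range fun v => f (Sum.inl v) :=
    hf.range_vertex_label ▸ ⟨(hf.label_mem_Icc _).1, h⟩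
  exact Sum.inl_ne_inr (hf.injective hv)

theorem valence_sub_edge_label_mem_Icc (hf : IsSuperEdgeMagic G f k) (e : G.edgeSet) :
    f (Sum.inr e) ≤ k ∧ k - f (Sum.inr e) ∈ Set.Icc 3 (2 * Fintype.card V - 1) := by
  obtain ⟨e, he⟩ := e
  induction e using Sym2.ind with
  | h u v =>
    have hadj : G.Adj u v := G.mem_edgeSet.mp he
    have hne : f (Sum.inl u) ≠ f (Sum.inl v) :=
      fun h => hadj.ne (Sum.inl_injective (hf.injective h))
    have hk := hf.1.2 u v hadj
    have hu := hf.2 u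
    have hv := hf.2 v
    simp only [Set.mem_Icc] at hu hv ⊢
    omega

theorem valence_eq (hf : IsSuperEdgeMagic G f k) (hV : 2 ≤ Fintype.card V)
    (hq : G.edgeSet.ncard = 2 * Fintype.card V - 3) : k = 3 * Fintype.card V := by
  have hsum := hf.valence_sub_edge_label_mem_Icc
  let s : G.edgeSet → ℕ := fun e => k - f (Sum.inr e)
  have hs : Function.Injective s := fun e₁ e₂ h =>
    Sum.inr_injective <| hf.injective <| by
      have hle₁ := (hsum e₁).1
      have hle₂ := (hsum e₂).1
      simp only [s] at h
      omega
  have hrange : Set.range s = Set.Icc 3 (2 * Fintype.card V - 1) :=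
    Set.range_eq_of_injective_of_ncard_le (Set.finite_Icc _ _) hs
      (Set.range_subset_iff.2 fun e => (hsum e).2)
      (by rw [Nat.card_coe_set_eq, hq, Set.ncard_Icc_nat]; omega)
  obtain ⟨e₁, he₁⟩ : 3 ∈ Set.range s := hrange ▸ ⟨le_rfl, by omega⟩
  obtain ⟨e₂, he₂⟩ : 2 * Fintype.card V - 1 ∈ Set.range s := hrange ▸ ⟨by omega, le_rfl⟩
  have hupper := (hf.label_mem_Icc (Sum.inr e₁)).2
  have hlower := hf.card_lt_edge_label e₂
  have hle₁ := (hsum e₁).1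
  have hle₂ := (hsum e₂).1
  simp only [s] at he₁ he₂
  omega

end IsSuperEdgeMagic

/-- Let `G` be a super edge-magic graph with `p` vertices and `q = 2p - 3`
edges that contains a triangle (equivalently, has girth `3`). Then every super
edge-magic labeling of `G` has valence `3p`; in particular the super edge-magic
set of `G` is `σ_G = {3p}` (so `|σ_G| = 1`). -/
theorem stmt_3 {V : Type*} [Fintype V] (G : SimpleGraph V) (p : ℕ)
    (hp : Fintype.card V = p) (hq : G.edgeSet.ncard = 2 * p - 3)
    (htri : ∃ a b c : V, G.Adj a b ∧ G.Adj b c ∧ G.Adj a c)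
    (hG : ∃ f k, IsSuperEdgeMagic G f k) :
    (∀ f k, IsSuperEdgeMagic G f k → k = 3 * p) ∧
    {k | ∃ f, IsSuperEdgeMagic G f k} = {3 * p} := by
  subst hp
  obtain ⟨a, b, -, hab, -, -⟩ := htri
  have hV : 2 ≤ Fintype.card V := Fintype.one_lt_card_iff.2 ⟨a, b, hab.ne⟩
  have hval : ∀ f k, IsSuperEdgeMagic G f k → k = 3 * Fintype.card V :=
    fun _ _ hf => hf.valence_eq hV hq
  obtain ⟨f, k, hf⟩ := hG
  exact ⟨hval, Set.eq_singleton_iff_unique_mem.2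
    ⟨⟨f, hval f k hf ▸ hf⟩, fun k' ⟨f', hf'⟩ => hval f' k' hf'⟩⟩
end

section
/- Let G be a super edge-magic graph with p ≥ 3 vertices and q = 2p − 4 edges. Then every super edge-magic labeling of G has valence 3p − 1 or 3p, and both of these valences are attained by some super edge-magic labeling of G; in particular the super edge-magic set of G satisfies σ_G = {3p − 1, 3p} and |σ_G| = 2. -/
section Aux

variable {V : Type*} [Fintype V] {G : SimpleGraph V}

lemma aux_edge_rep (e : G.edgeSet) : ∃ u v, ∃ h : G.Adj u v,
    e = ⟨s(u, v), G.mem_edgeSet.mpr h⟩ := by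
  obtain ⟨z, hz⟩ := e
  revert hz
  induction z using Sym2.ind with
  | _ u v => exact fun hz => ⟨u, v, hz, rfl⟩

lemma aux_ncard_Icc (a b : ℕ) : (Set.Icc a b).ncard = b + 1 - a := by
  simp [Set.ncard_eq_toFinset_card', Set.toFinset_Icc]

lemma aux_ranges {f : V ⊕ G.edgeSet → ℕ} {k : ℕ}
    (hf : IsSuperEdgeMagic G f k) :
    Set.range (fun v => f (Sum.inl v)) = Set.Icc 1 (Fintype.card V) ∧
    Set.range (fun e : G.edgeSet => f (Sum.inr e)) =
      Set.Icc (Fintype.card V + 1) (Fintype.card V + G.edgeSet.ncard) := by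
  set p := Fintype.card V with hp
  set q := G.edgeSet.ncard with hq
  have hinj : Function.Injective f := by
    intro x y hxy
    exact hf.1.1.injOn (Set.mem_univ x) (Set.mem_univ y) hxy
  have hV : Set.range (fun v => f (Sum.inl v)) = Set.Icc 1 p := by
    apply Set.eq_of_subset_of_ncard_le
    · rintro x ⟨v, rfl⟩; exact hf.2 v
    · rw [aux_ncard_Icc]
      have h1 : (Set.range (fun v => f (Sum.inl v))).ncard = p := by
        rw [← Nat.card_coe_set_eq,
          Nat.card_range_of_injective (fun a b hab => Sum.inl_injective (hinj hab)),
          Nat.card_eq_fintype_card]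
      omega
    · exact Set.finite_Icc _ _
  refine ⟨hV, ?_⟩
  apply Set.eq_of_subset_of_ncard_le
  · rintro x ⟨e, rfl⟩
    have hmem : f (Sum.inr e) ∈ Set.Icc 1 (p + q) := hf.1.1.mapsTo (Set.mem_univ _)
    simp only [Set.mem_Icc] at hmem ⊢
    refine ⟨?_, hmem.2⟩
    by_contra hle
    have hle' : f (Sum.inr e) ∈ Set.Icc 1 p := by
      simp only [Set.mem_Icc]; omega
    rw [← hV] at hle'
    obtain ⟨v, hv⟩ := hle'
    exact (Sum.inl_ne_inr (hinj hv)).elim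
  · rw [aux_ncard_Icc]
    have h1 : (Set.range (fun e : G.edgeSet => f (Sum.inr e))).ncard = q := by
      rw [← Nat.card_coe_set_eq,
        Nat.card_range_of_injective (fun a b hab => Sum.inr_injective (hinj hab)),
        hq, Nat.card_coe_set_eq]
    omega
  · exact Set.finite_Icc _ _

lemma aux_valence {f : V ⊕ G.edgeSet → ℕ} {k : ℕ}
    (hf : IsSuperEdgeMagic G f k) (hq1 : 1 ≤ G.edgeSet.ncard) :
    Fintype.card V + G.edgeSet.ncard + 3 ≤ k ∧ k ≤ 3 * Fintype.card V := by
  set p := Fintype.card V with hp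
  set q := G.edgeSet.ncard with hq
  have hinj : Function.Injective f := by
    intro x y hxy
    exact hf.1.1.injOn (Set.mem_univ x) (Set.mem_univ y) hxy
  obtain ⟨hV, hE⟩ := aux_ranges hf
  -- an edge labelled p + q and an edge labelled p + 1
  have hbig : (p + q : ℕ) ∈ Set.range (fun e : G.edgeSet => f (Sum.inr e)) := by
    rw [hE]; simp only [Set.mem_Icc]; omega
  have hsmall : (p + 1 : ℕ) ∈ Set.range (fun e : G.edgeSet => f (Sum.inr e)) := by
    rw [hE]; simp only [Set.mem_Icc]; omega
  obtain ⟨e1, he1⟩ := hbig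
  obtain ⟨e2, he2⟩ := hsmall
  have key : ∀ e : G.edgeSet, ∃ a b : ℕ, 1 ≤ a ∧ a ≤ p ∧ 1 ≤ b ∧ b ≤ p ∧ a ≠ b ∧
      a + b + f (Sum.inr e) = k := by
    intro e
    obtain ⟨u, v, h, he⟩ := aux_edge_rep e
    refine ⟨f (Sum.inl u), f (Sum.inl v), ?_, ?_, ?_, ?_, ?_, ?_⟩
    · exact (hf.2 u).1
    · exact (hf.2 u).2
    · exact (hf.2 v).1
    · exact (hf.2 v).2
    · intro hab
      exact h.ne (Sum.inl_injective (hinj hab))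
    · rw [he]; exact hf.1.2 u v h
  obtain ⟨a1, b1, ha11, ha12, hb11, hb12, hne1, hsum1⟩ := key e1
  obtain ⟨a2, b2, ha21, ha22, hb21, hb22, hne2, hsum2⟩ := key e2
  have he1' : f (Sum.inr e1) = p + q := he1
  have he2' : f (Sum.inr e2) = p + 1 := he2
  omega

/-- The complementary labeling attains the complementary valence. -/
lemma aux_mirror {f : V ⊕ G.edgeSet → ℕ} {k : ℕ}
    (hf : IsSuperEdgeMagic G f k) :
    ∃ g, IsSuperEdgeMagic G g
      (4 * Fintype.card V + G.edgeSet.ncard + 3 - k) := by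
  classical
  set p := Fintype.card V with hp
  set q := G.edgeSet.ncard with hq
  obtain ⟨hV, hE⟩ := aux_ranges hf
  have hfV : ∀ v, f (Sum.inl v) ∈ Set.Icc 1 p := hf.2
  have hfE : ∀ e : G.edgeSet, f (Sum.inr e) ∈ Set.Icc (p + 1) (p + q) := by
    intro e; rw [← hE]; exact ⟨e, rfl⟩
  set g : V ⊕ G.edgeSet → ℕ :=
    Sum.elim (fun v => p + 1 - f (Sum.inl v))
      (fun e => 2 * p + q + 1 - f (Sum.inr e)) with hg
  set h : ℕ → ℕ := fun n => if n ≤ p then p + 1 - n else 2 * p + q + 1 - n with hh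
  have hmaps : Set.MapsTo h (Set.Icc 1 (p + q)) (Set.Icc 1 (p + q)) := by
    intro n hn
    simp only [Set.mem_Icc] at hn ⊢
    by_cases hc : n ≤ p <;> simp only [hh, hc, if_pos, if_neg, if_true, if_false] <;> omega
  have hinv : Set.InvOn h h (Set.Icc 1 (p + q)) (Set.Icc 1 (p + q)) := by
    constructor <;>
    · intro n hn
      simp only [Set.mem_Icc] at hn
      by_cases hc : n ≤ p
      · have h1 : h n = p + 1 - n := by simp [hh, hc]
        have h2 : h n ≤ p := by omega
        simp only [hh] at h2 ⊢
        rw [if_pos hc] at *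
        rw [if_pos (by omega : p + 1 - n ≤ p)]
        omega
      · have h1 : h n = 2 * p + q + 1 - n := by simp [hh, hc]
        simp only [hh]
        rw [if_neg hc, if_neg (by omega : ¬ 2 * p + q + 1 - n ≤ p)]
        omega
  have hbijh : Set.BijOn h (Set.Icc 1 (p + q)) (Set.Icc 1 (p + q)) :=
    hinv.bijOn hmaps hmaps
  have heq : Set.EqOn (h ∘ f) g Set.univ := by
    rintro (v | e) -
    · have := hfV v
      simp only [Set.mem_Icc] at this
      simp [hg, hh, Function.comp, this.2]
    · have := hfE e
      simp only [Set.mem_Icc] at this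
      simp only [Function.comp, hg, hh, Sum.elim_inr]
      rw [if_neg (by omega)]
  refine ⟨g, ⟨?_, ?_⟩, ?_⟩
  · exact (hbijh.comp hf.1.1).congr heq
  · intro u v hadj
    have ha := hfV u
    have hb := hfV v
    have hc := hfE ⟨s(u, v), G.mem_edgeSet.mpr hadj⟩
    have hk := hf.1.2 u v hadj
    simp only [Set.mem_Icc] at ha hb hc
    simp only [hg, Sum.elim_inl, Sum.elim_inr]
    omega
  · intro v
    have := hfV v
    simp only [Set.mem_Icc] at this ⊢
    simp only [hg, Sum.elim_inl]
    omega

end Aux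

/-- Let `G` be a super edge-magic graph with `p ≥ 3` vertices and `q = 2p - 4`
edges. Then every super edge-magic labeling of `G` has valence `3p - 1` or
`3p`, and both valences are attained; in particular the super edge-magic set of
`G` is `σ_G = {3p - 1, 3p}` (so `|σ_G| = 2`). -/
theorem stmt_4 {V : Type*} [Fintype V] (G : SimpleGraph V) (p : ℕ)
    (hp : Fintype.card V = p) (hq : G.edgeSet.ncard = 2 * p - 4) (hp3 : 3 ≤ p)
    (hG : ∃ f k, IsSuperEdgeMagic G f k) :
    (∀ f k, IsSuperEdgeMagic G f k → k = 3 * p - 1 ∨ k = 3 * p) ∧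
    (∃ f, IsSuperEdgeMagic G f (3 * p - 1)) ∧ (∃ f, IsSuperEdgeMagic G f (3 * p)) ∧
    {k | ∃ f, IsSuperEdgeMagic G f k} = {3 * p - 1, 3 * p} := by
  have hq1 : 1 ≤ G.edgeSet.ncard := by omega
  have part1 : ∀ f k, IsSuperEdgeMagic G f k → k = 3 * p - 1 ∨ k = 3 * p := by
    intro f k hf
    have := aux_valence hf hq1
    rw [hp, hq] at this
    omega
  obtain ⟨f, k, hf⟩ := hG
  have hk := part1 f k hf
  obtain ⟨g, hgm⟩ := aux_mirror hf
  rw [hp, hq] at hgm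
  have both : (∃ f, IsSuperEdgeMagic G f (3 * p - 1)) ∧
      (∃ f, IsSuperEdgeMagic G f (3 * p)) := by
    rcases hk with hk | hk
    · subst hk
      have hval : 4 * p + (2 * p - 4) + 3 - (3 * p - 1) = 3 * p := by omega
      rw [hval] at hgm
      exact ⟨⟨f, hf⟩, ⟨g, hgm⟩⟩
    · subst hk
      have hval : 4 * p + (2 * p - 4) + 3 - 3 * p = 3 * p - 1 := by omega
      rw [hval] at hgm
      exact ⟨⟨g, hgm⟩, ⟨f, hf⟩⟩
  refine ⟨part1, both.1, both.2, ?_⟩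
  ext m
  simp only [Set.mem_setOf_eq, Set.mem_insert_iff, Set.mem_singleton_iff]
  constructor
  · rintro ⟨f', hf'⟩
    exact part1 f' m hf'
  · rintro (rfl | rfl)
    · exact both.1
    · exact both.2
end

section
/- For all positive integers n and l, the set S(T_1) of valences of type-T_1 super edge-magic labelings of K_{1,n} ∪ lK_1 consists of consecutive integers: whenever k_1, k_2 ∈ S(T_1) and k is an integer with k_1 ≤ k ≤ k_2, then k ∈ S(T_1). -/
/-- The graph `K_{1,n} ∪ lK_1`: the disjoint union of the star `K_{1,n}`
(with center `0` and leaves `1, …, n`) and `l` isolated vertices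
(`n+1, …, n+l`), on `n + l + 1` vertices. -/
def starUnion (n l : ℕ) : SimpleGraph (Fin (n + l + 1)) where
  Adj u v := (u = 0 ∧ v ≠ 0 ∧ (v : ℕ) ≤ n) ∨ (v = 0 ∧ u ≠ 0 ∧ (u : ℕ) ≤ n)
  symm := ⟨fun u v h => h.symm⟩
  loopless := ⟨fun v h => by rcases h with ⟨h1, h2, _⟩ | ⟨h1, h2, _⟩ <;> exact h2 h1⟩

open Set

def edgeSum {V : Type*} (g : V → ℕ) : Sym2 V → ℕ :=
  Sym2.lift ⟨fun u v => g u + g v, fun u v => Nat.add_comm (g u) (g v)⟩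

@[simp]
theorem edgeSum_mk {V : Type*} (g : V → ℕ) (u v : V) : edgeSum g s(u, v) = g u + g v := rfl

section SuperEdgeMagic

variable {V : Type*} [Fintype V] {G : SimpleGraph V}

theorem IsSuperEdgeMagic.exists_adj_add_eq {f : V ⊕ G.edgeSet → ℕ} {k m : ℕ}
    (hf : IsSuperEdgeMagic G f k)
    (hm : m ∈ Icc (Fintype.card V + 1) (Fintype.card V + G.edgeSet.ncard)) :
    ∃ u v, G.Adj u v ∧ f (Sum.inl u) + f (Sum.inl v) + m = k := by
  obtain ⟨⟨hbij, hmagic⟩, hvert⟩ := hf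
  obtain ⟨x, -, rfl⟩ := hbij.surjOn (Icc_subset_Icc_left (by omega) hm)
  rcases x with w | ⟨e, he⟩
  · exact absurd (hvert w).2 (by simp only [mem_Icc] at hm; omega)
  · induction e using Sym2.ind with
    | h u v => exact ⟨u, v, he, hmagic u v he⟩

theorem isSuperEdgeMagic_of_bijOn_edgeSum {g : V → ℕ} {s q : ℕ}
    (hg : BijOn g univ (Icc 1 (Fintype.card V)))
    (hsum : BijOn (edgeSum g) G.edgeSet (Ico s (s + q))) :
    IsSuperEdgeMagic G (Sum.elim g fun e => Fintype.card V + q + s - edgeSum g e)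
      (Fintype.card V + q + s) := by
  have hq : G.edgeSet.ncard = q := by rw [hsum.ncard_eq, ncard_Ico_nat]; omega
  have hvert (v : V) : g v ∈ Icc 1 (Fintype.card V) := hg.mapsTo (mem_univ v)
  have hedge {e} (he : e ∈ G.edgeSet) : edgeSum g e ∈ Ico s (s + q) := hsum.mapsTo he
  refine ⟨⟨⟨?_, ?_, ?_⟩, fun u v h => ?_⟩, hvert⟩
  · rintro (v | e) -
    · have := hvert v
      simp only [mem_Icc, Sum.elim_inl] at this ⊢
      omega
    · have := hedge e.2
      simp only [mem_Icc, mem_Ico, Sum.elim_inr] at this ⊢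
      omega
  · rintro (v | e) - (w | e') - h
    · exact congrArg Sum.inl (hg.injOn trivial trivial h)
    · have := hvert v
      have := hedge e'.2
      simp only [mem_Icc, mem_Ico, Sum.elim_inl, Sum.elim_inr] at *
      omega
    · have := hvert w
      have := hedge e.2
      simp only [mem_Icc, mem_Ico, Sum.elim_inl, Sum.elim_inr] at *
      omega
    · have := hedge e.2
      have := hedge e'.2
      simp only [mem_Ico, Sum.elim_inr] at *
      exact congrArg Sum.inr (Subtype.ext (hsum.injOn e.2 e'.2 (by omega)))
  · intro m hm
    rw [mem_Icc, hq] at hm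
    by_cases hmp : m ≤ Fintype.card V
    · obtain ⟨v, -, hv⟩ := hg.surjOn ⟨hm.1, hmp⟩
      exact ⟨Sum.inl v, trivial, hv⟩
    · obtain ⟨e, he, hem⟩ := hsum.surjOn (show Fintype.card V + q + s - m ∈ Ico s (s + q) from
        ⟨by omega, by omega⟩)
      exact ⟨Sum.inr ⟨e, he⟩, trivial, by simp only [Sum.elim_inr, hem]; omega⟩
  · have := hedge (G.mem_edgeSet.mpr h)
    simp only [mem_Ico, edgeSum_mk, Sum.elim_inl, Sum.elim_inr] at this ⊢
    omega

end SuperEdgeMagic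

section Star

variable {n l : ℕ}

def typeOneValences (n l : ℕ) : Set ℕ :=
  {k | ∃ f, IsSuperEdgeMagic (starUnion n l) f k ∧
    ∀ v : Fin (n + l + 1), v ≠ 0 → (v : ℕ) ≤ n → f (Sum.inl 0) < f (Sum.inl v)}

theorem mem_edgeSet_starUnion {e : Sym2 (Fin (n + l + 1))} :
    e ∈ (starUnion n l).edgeSet ↔ ∃ v : Fin (n + l + 1), v ≠ 0 ∧ (v : ℕ) ≤ n ∧ s(0, v) = e := by
  induction e using Sym2.ind with
  | h u w =>
    constructor
    · rintro (⟨rfl, hw, hwn⟩ | ⟨rfl, hu, hun⟩)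
      · exact ⟨w, hw, hwn, rfl⟩
      · exact ⟨u, hu, hun, Sym2.eq_swap⟩
    · rintro ⟨v, hv, hvn, he⟩
      rw [← he]
      exact Or.inl ⟨rfl, hv, hvn⟩

theorem ncard_edgeSet_starUnion : (starUnion n l).edgeSet.ncard = n := by
  refine ncard_eq_of_bijective (fun i hi => s(0, ⟨i + 1, by omega⟩)) (fun e he => ?_)
    (fun i hi => mem_edgeSet_starUnion.mpr ⟨_, Fin.ne_of_val_ne (by simp), by simp; omega, rfl⟩)
    (fun i j _ _ h => by simpa using Sym2.congr_right.mp h)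
  obtain ⟨v, hv, hvn, rfl⟩ := mem_edgeSet_starUnion.mp he
  have : (v : ℕ) ≠ 0 := Fin.val_ne_zero_iff.mpr hv
  exact ⟨v - 1, by omega,
    congrArg _ (Fin.ext (Nat.sub_add_cancel (Nat.one_le_iff_ne_zero.mpr this)))⟩

/-- The centre gets `c`, leaf `x` gets `a + x - 1`, and the isolated vertices take the
remaining labels in increasing order. -/
def starVertexLabel (n c a x : ℕ) : ℕ :=
  if x = 0 then c else if x ≤ n then a + x - 1
  else if x - n < c then x - n else if x - n + 1 < a then x - n + 1 else x + 1

def starVertexLabelInv (n c a m : ℕ) : ℕ :=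
  if m = c then 0 else if a ≤ m ∧ m < a + n then m - a + 1
  else if m < c then n + m else if m < a then n + m - 1 else m - 1

theorem starVertexLabel_zero (n c a : ℕ) : starVertexLabel n c a 0 = c := rfl

theorem starVertexLabel_of_le {c a x : ℕ} (hx : x ≠ 0) (hxn : x ≤ n) :
    starVertexLabel n c a x = a + x - 1 := by
  simp only [starVertexLabel, hx, hxn, if_false, if_true]

theorem bijOn_starVertexLabel {c a : ℕ} (hc : 1 ≤ c) (hca : c < a) (ha : a + n ≤ n + l + 2) :
    BijOn (starVertexLabel n c a) (Iic (n + l)) (Icc 1 (n + l + 1)) := by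
  refine ⟨fun x hx => ?_, fun x hx y hy hxy => ?_, fun m hm => ⟨starVertexLabelInv n c a m, ?_⟩⟩
  all_goals
    simp only [mem_Iic, mem_Icc, starVertexLabel, starVertexLabelInv] at *
    split_ifs at * <;> omega

theorem bijOn_starVertexLabel_fin {c a : ℕ} (hc : 1 ≤ c) (hca : c < a) (ha : a + n ≤ n + l + 2) :
    BijOn (fun v : Fin (n + l + 1) => starVertexLabel n c a v) univ (Icc 1 (n + l + 1)) :=
  (bijOn_starVertexLabel hc hca ha).comp
    ⟨fun v _ => Nat.le_of_lt_succ v.2, Fin.val_injective.injOn,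
      fun x hx => ⟨⟨x, Nat.lt_succ_of_le hx⟩, trivial, rfl⟩⟩

theorem bijOn_edgeSum_starVertexLabel (c a : ℕ) :
    BijOn (edgeSum fun v : Fin (n + l + 1) => starVertexLabel n c a v) (starUnion n l).edgeSet
      (Ico (c + a) (c + a + n)) := by
  have sum_leaf {v : Fin (n + l + 1)} (hv : v ≠ 0) (hvn : (v : ℕ) ≤ n) :
      edgeSum (fun v : Fin (n + l + 1) => starVertexLabel n c a v) s(0, v) = c + a + v - 1 := by
    have : (v : ℕ) ≠ 0 := Fin.val_ne_zero_iff.mpr hv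
    simp only [edgeSum_mk, Fin.val_zero, starVertexLabel_zero, starVertexLabel_of_le this hvn]
    omega
  refine ⟨fun e he => ?_, fun e he e' he' h => ?_, fun m hm => ?_⟩
  · obtain ⟨v, hv, hvn, rfl⟩ := mem_edgeSet_starUnion.mp he
    have : (v : ℕ) ≠ 0 := Fin.val_ne_zero_iff.mpr hv
    rw [sum_leaf hv hvn, mem_Ico]
    omega
  · obtain ⟨v, hv, hvn, rfl⟩ := mem_edgeSet_starUnion.mp he
    obtain ⟨v', hv', hvn', rfl⟩ := mem_edgeSet_starUnion.mp he'
    have : (v : ℕ) ≠ 0 := Fin.val_ne_zero_iff.mpr hv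
    have : (v' : ℕ) ≠ 0 := Fin.val_ne_zero_iff.mpr hv'
    rw [sum_leaf hv hvn, sum_leaf hv' hvn'] at h
    rw [Fin.ext (by omega : (v : ℕ) = v')]
  · rw [mem_Ico] at hm
    let v : Fin (n + l + 1) := ⟨m + 1 - (c + a), by omega⟩
    have hv : v ≠ 0 := Fin.ne_of_val_ne (by simp only [v, Fin.val_zero]; omega)
    have hvn : (v : ℕ) ≤ n := by simp only [v]; omega
    refine ⟨s(0, v), mem_edgeSet_starUnion.mpr ⟨v, hv, hvn, rfl⟩, ?_⟩
    rw [sum_leaf hv hvn]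
    simp only [v]
    omega

theorem mem_typeOneValences {c a : ℕ} (hc : 1 ≤ c) (hca : c < a) (ha : a + n ≤ n + l + 2) :
    n + l + 1 + n + (c + a) ∈ typeOneValences n l := by
  have h := isSuperEdgeMagic_of_bijOn_edgeSum (G := starUnion n l)
    (by rw [Fintype.card_fin]; exact bijOn_starVertexLabel_fin hc hca ha)
    (bijOn_edgeSum_starVertexLabel c a)
  rw [Fintype.card_fin] at h
  refine ⟨_, h, fun v hv hvn => ?_⟩
  have : (v : ℕ) ≠ 0 := Fin.val_ne_zero_iff.mpr hv
  simp only [Sum.elim_inl, Fin.val_zero, starVertexLabel_zero, starVertexLabel_of_le this hvn]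
  omega

theorem typeOneValences_subset_Icc (hn : 1 ≤ n) :
    typeOneValences n l ⊆ Icc (2 * n + l + 4) (2 * n + 3 * l + 4) := by
  rintro k ⟨f, hf, hT₁⟩
  have hp : Fintype.card (Fin (n + l + 1)) = n + l + 1 := Fintype.card_fin _
  have leaf_sum (m : ℕ) (hm : m ∈ Icc (n + l + 2) (2 * n + l + 1)) :
      ∃ w : Fin (n + l + 1), w ≠ 0 ∧ (w : ℕ) ≤ n ∧ f (Sum.inl 0) + f (Sum.inl w) + m = k := by
    obtain ⟨u, v, huv, hsum⟩ := hf.exists_adj_add_eq (by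
      rw [hp, ncard_edgeSet_starUnion]
      exact Icc_subset_Icc (by omega) (by omega) hm)
    rcases huv with ⟨rfl, hv, hvn⟩ | ⟨rfl, hu, hun⟩
    · exact ⟨v, hv, hvn, hsum⟩
    · exact ⟨u, hu, hun, by omega⟩
  obtain ⟨w₁, -, -, hsum₁⟩ := leaf_sum (n + l + 2) ⟨le_rfl, by omega⟩
  obtain ⟨w₂, hw₂, hw₂n, hsum₂⟩ := leaf_sum (2 * n + l + 1) ⟨by omega, le_rfl⟩
  have hc := hf.2 0
  have h₁ := hf.2 w₁
  have h₂ := hT₁ w₂ hw₂ hw₂n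
  rw [hp, mem_Icc] at hc h₁
  rw [mem_Icc]
  omega

theorem typeOneValences_eq_Icc (hn : 1 ≤ n) :
    typeOneValences n l = Icc (2 * n + l + 4) (2 * n + 3 * l + 4) := by
  refine (typeOneValences_subset_Icc hn).antisymm fun k ⟨hk₁, hk₂⟩ => ?_
  rcases le_or_gt k (2 * n + 2 * l + 4) with hk | hk
  · convert mem_typeOneValences (n := n) (l := l) (c := 1) (a := k - (2 * n + l + 2))
      le_rfl (by omega) (by omega) using 1
    omega
  · convert mem_typeOneValences (n := n) (l := l) (c := k - (2 * n + 2 * l + 3)) (a := l + 2)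
      (by omega) (by omega) (by omega) using 1
    omega

theorem ordConnected_typeOneValences (hn : 1 ≤ n) : (typeOneValences n l).OrdConnected := by
  rw [typeOneValences_eq_Icc hn]
  exact ordConnected_Icc

end Star

theorem stmt_14_general (n l : ℕ) (hn : 1 ≤ n) :
    ∀ k₁ k₂ k : ℕ,
      (∃ f, IsSuperEdgeMagic (starUnion n l) f k₁ ∧
        ∀ v : Fin (n + l + 1), v ≠ 0 → (v : ℕ) ≤ n →
          f (Sum.inl 0) < f (Sum.inl v)) →
      (∃ f, IsSuperEdgeMagic (starUnion n l) f k₂ ∧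
        ∀ v : Fin (n + l + 1), v ≠ 0 → (v : ℕ) ≤ n →
          f (Sum.inl 0) < f (Sum.inl v)) →
      k₁ ≤ k → k ≤ k₂ →
      ∃ f, IsSuperEdgeMagic (starUnion n l) f k ∧
        ∀ v : Fin (n + l + 1), v ≠ 0 → (v : ℕ) ≤ n →
          f (Sum.inl 0) < f (Sum.inl v) :=
  fun _ _ _ h₁ h₂ hk₁ hk₂ => (ordConnected_typeOneValences hn).out h₁ h₂ ⟨hk₁, hk₂⟩

/-- For all positive integers `n` and `l`, the set `S(T₁)` of valences of
type-`T₁` super edge-magic labelings of `K_{1,n} ∪ lK_1` (those with the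
center label smaller than all leaf labels) consists of consecutive integers:
whenever `k₁, k₂ ∈ S(T₁)` and `k₁ ≤ k ≤ k₂`, also `k ∈ S(T₁)`. -/
theorem stmt_14 (n l : ℕ) (hn : 1 ≤ n) (hl : 1 ≤ l) :
    ∀ k₁ k₂ k : ℕ,
      (∃ f, IsSuperEdgeMagic (starUnion n l) f k₁ ∧
        ∀ v : Fin (n + l + 1), v ≠ 0 → (v : ℕ) ≤ n →
          f (Sum.inl 0) < f (Sum.inl v)) →
      (∃ f, IsSuperEdgeMagic (starUnion n l) f k₂ ∧
        ∀ v : Fin (n + l + 1), v ≠ 0 → (v : ℕ) ≤ n →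
          f (Sum.inl 0) < f (Sum.inl v)) →
      k₁ ≤ k → k ≤ k₂ →
      ∃ f, IsSuperEdgeMagic (starUnion n l) f k ∧
        ∀ v : Fin (n + l + 1), v ≠ 0 → (v : ℕ) ≤ n →
          f (Sum.inl 0) < f (Sum.inl v) :=
  stmt_14_general n l hn
end
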